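/- Let C = Φ(𝒞) be a Z2Z4-linear code of binary length n = α+2β, where 𝒞 is a Z2Z4-additive code of type (α,β;γ,δ;κ). Then γ+2δ ≤ rank(C) ≤ min(β+δ+κ, γ+2δ+δ(δ−1)/2). -/

import Mathlib

/-- The ambient group `Z2^α × Z4^β`, with componentwise ring structure
(so `u * v` is the componentwise product). -/
abbrev Amb (α β : ℕ) := (Fin α → ZMod 2) × (Fin β → ZMod 4)

/-- The binary space `Z2^α × (Z2²)^β ≅ Z2^(α+2β)`. -/
abbrev Bin (α β : ℕ) := (Fin α → ZMod 2) × (Fin β → ZMod 2 × ZMod 2)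

/-- The Gray map `φ : Z4 → Z2²` with `φ(0)=(0,0), φ(1)=(0,1), φ(2)=(1,1), φ(3)=(1,0)`. -/
def grayPair (y : ZMod 4) : ZMod 2 × ZMod 2 :=
  match y.val with
  | 0 => (0, 0)
  | 1 => (0, 1)
  | 2 => (1, 1)
  | _ => (1, 0)

/-- The extended Gray map `Φ : Z2^α × Z4^β → Z2^(α+2β)`. -/
def Phi {α β : ℕ} (u : Amb α β) : Bin α β :=
  (u.1, fun i => grayPair (u.2 i))

/-- The kernel `K(C) = {x | x + C = C}` of a binary code. -/
def kernelK {α β : ℕ} (C : Set (Bin α β)) : Set (Bin α β) :=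
  {x | (fun y => x + y) '' C = C}

/-- The rank of a binary code: the `Z2`-dimension of its linear span. -/
noncomputable def rankOf {α β : ℕ} (C : Set (Bin α β)) : ℕ :=
  Module.finrank (ZMod 2) (Submodule.span (ZMod 2) C)

/-- The dimension of the kernel of a binary code. -/
noncomputable def kerDim {α β : ℕ} (C : Set (Bin α β)) : ℕ :=
  Module.finrank (ZMod 2) (Submodule.span (ZMod 2) (kernelK C))

/-- A `Z2Z4`-additive code `C ⊆ Z2^α × Z4^β` is of type `(α,β;γ,δ;κ)`:
`|C| = 2^(γ+2δ)`, the number of elements `x` with `2x = 0` is `2^(γ+δ)`, and `κ` is the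
`Z2`-dimension of the projection onto the first `α` coordinates of `{x ∈ C | 2x = 0}`. -/
def IsTypeOf (α β γ δ κ : ℕ) (C : AddSubgroup (Amb α β)) : Prop :=
  Nat.card C = 2 ^ (γ + 2 * δ) ∧
  Nat.card {x : Amb α β | x ∈ C ∧ 2 • x = 0} = 2 ^ (γ + δ) ∧
  Module.finrank (ZMod 2)
    (Submodule.span (ZMod 2) (Prod.fst '' {x : Amb α β | x ∈ C ∧ 2 • x = 0})) = κ

/-!
The Gray map is injective and satisfies `Φ u + Φ v = Φ (u + v + 2uv)`. Hence `|C| ≤ |⟨Φ(C)⟩|`,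
which is the lower bound, and for the upper bounds it suffices to find a subgroup `S ⊇ C` closed
under `(x, y) ↦ 2xy`: then `Φ(S)` is a linear space containing `Φ(C)`, so `2 ^ rank ≤ |S|`.

Since `2xy = (2x)y` only depends on `2x` and `2y`, lifting a basis `2u₁, …, 2u_δ` of `2C` to
`uᵢ ∈ C` and using `2uᵢuᵢ = 2uᵢ ∈ C` shows that `S = C + ⟨2uᵢuⱼ | i ≠ j⟩` is closed. Its order is at
most `|C| · 2 ^ (δ(δ-1)/2)`. Moreover `2S = 2C` has order `2 ^ δ`, and an element of order two of
`S` has its binary part in the span of the binary parts of `C[2]`, of dimension `κ`, and its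
quaternary part among the `2 ^ β` elements of order at most two; so `|S| ≤ 2 ^ (κ + β) · 2 ^ δ`.
-/

section AddCommGroup
variable {G : Type*} [AddCommGroup G]

lemma AddSubgroup.natCard_sup_le (H K : AddSubgroup G) :
    Nat.card ↥(H ⊔ K) ≤ Nat.card H * Nat.card K := by
  rw [← SetLike.coe_sort_coe, AddSubgroup.add_normal]
  exact Set.natCard_add_le

lemma AddSubgroup.natCard_closure_range_le_two_pow {ι : Type*} [Fintype ι] (f : ι → G)
    (hf : ∀ i, 2 • f i = 0) :
    Nat.card (AddSubgroup.closure (Set.range f)) ≤ 2 ^ Fintype.card ι := by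
  classical
  suffices ∀ s : Finset ι, Nat.card (AddSubgroup.closure (f '' s)) ≤ 2 ^ s.card by
    simpa using this Finset.univ
  intro s
  induction s using Finset.induction_on with
  | empty => simp
  | insert a s ha ih =>
    rw [Finset.coe_insert, Set.image_insert_eq, ← Set.singleton_union, AddSubgroup.closure_union,
      Finset.card_insert_of_notMem ha, pow_succ']
    refine (natCard_sup_le _ _).trans (Nat.mul_le_mul ?_ ih)
    rw [← AddSubgroup.zmultiples_eq_closure, Nat.card_zmultiples]
    exact Nat.le_of_dvd two_pos (addOrderOf_dvd_of_nsmul_eq_zero (hf a))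

lemma AddSubgroup.natCard_eq_natCard_two_torsion_mul (H : AddSubgroup G) :
    Nat.card H = Nat.card {x | x ∈ H ∧ 2 • x = 0} * Nat.card (H.map (nsmulAddMonoidHom 2)) := by
  let f := (nsmulAddMonoidHom 2).comp H.subtype
  rw [← f.ker.card_mul_index, AddSubgroup.index_ker f, AddMonoidHom.range_comp,
    AddSubgroup.range_subtype]
  congr 1
  exact Nat.card_congr
    { toFun := fun x => ⟨x.1, x.1.2, x.2⟩
      invFun := fun x => ⟨⟨x.1, x.2.1⟩, x.2.2⟩
      left_inv := fun _ => rfl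
      right_inv := fun _ => rfl }

lemma AddSubgroup.exists_closure_range_eq_of_two_nsmul_eq_zero (T : AddSubgroup G)
    (hT : ∀ x ∈ T, 2 • x = 0) {δ : ℕ} (hδ : Nat.card T = 2 ^ δ) :
    ∃ v : Fin δ → G, AddSubgroup.closure (Set.range v) = T := by
  have : Finite T := Nat.finite_of_card_ne_zero (by simp [hδ])
  let _ : Module (ZMod 2) T :=
    AddCommGroup.zmodModule (by rintro ⟨x, hx⟩; exact Subtype.ext (hT x hx))
  have hrank : Module.finrank (ZMod 2) T = δ := by
    rw [Module.natCard_eq_pow_finrank (K := ZMod 2), Nat.card_zmod] at hδ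
    exact Nat.pow_right_injective le_rfl hδ
  let b := Module.finBasisOfFinrankEq (ZMod 2) T hrank
  refine ⟨fun i => b i, le_antisymm ?_ fun x hx => ?_⟩
  · rw [AddSubgroup.closure_le]
    rintro _ ⟨i, rfl⟩
    exact (b i).2
  · have hspan : Submodule.span (ZMod 2) (Set.range b) ≤
        AddSubgroup.toZModSubmodule 2 (AddSubgroup.closure (Set.range b)) :=
      Submodule.span_le.2 AddSubgroup.subset_closure
    have hxspan : (⟨x, hx⟩ : T) ∈ Submodule.span (ZMod 2) (Set.range b) :=
      b.span_eq ▸ Submodule.mem_top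
    have := AddSubgroup.mem_map_of_mem T.subtype (hspan hxspan)
    rwa [AddMonoidHom.map_closure, ← Set.range_comp] at this

lemma AddSubgroup.exists_lift_generators_map_two_nsmul (C : AddSubgroup G)
    (hC : ∀ x ∈ C, 2 • 2 • x = 0) {δ : ℕ} (hδ : Nat.card (C.map (nsmulAddMonoidHom 2)) = 2 ^ δ) :
    ∃ u : Fin δ → G, (∀ i, u i ∈ C) ∧
      ∀ c ∈ C, ∃ l ∈ AddSubgroup.closure (Set.range u), 2 • l = 2 • c := by
  obtain ⟨v, hv⟩ := exists_closure_range_eq_of_two_nsmul_eq_zero _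
    (by rintro _ ⟨c, hc, rfl⟩; exact hC c hc) hδ
  choose u huC hu using fun i =>
    AddSubgroup.mem_map.1 (hv ▸ AddSubgroup.subset_closure (Set.mem_range_self i))
  refine ⟨u, huC, fun c hc => ?_⟩
  have h2c : 2 • c ∈ (AddSubgroup.closure (Set.range u)).map (nsmulAddMonoidHom 2) := by
    rw [AddMonoidHom.map_closure, ← Set.range_comp,
      show ⇑(nsmulAddMonoidHom 2) ∘ u = v from funext hu, hv]
    exact AddSubgroup.mem_map_of_mem _ hc
  exact AddSubgroup.mem_map.1 h2c

lemma AddSubgroup.map_two_nsmul_sup_eq (hG : ∀ x : G, 2 • 2 • x = 0)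
    (C : AddSubgroup G) {E : AddSubgroup G} (hE : E ≤ (nsmulAddMonoidHom 2).range) :
    (C ⊔ E).map (nsmulAddMonoidHom 2) = C.map (nsmulAddMonoidHom 2) := by
  have hE0 : E.map (nsmulAddMonoidHom 2) = ⊥ := by
    rw [AddSubgroup.map_eq_bot_iff]
    rintro _ hx
    obtain ⟨x, rfl⟩ := hE hx
    exact hG x
  rw [AddSubgroup.map_sup, hE0, sup_bot_eq]

end AddCommGroup

section CommRing
variable {R : Type*} [CommRing R] {δ : ℕ}

lemma two_nsmul_two_nsmul_eq_zero (hR : ∀ x : R, 2 • (x * x) = 2 • x) (x : R) :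
    2 • 2 • x = 0 := by
  have h1 := hR x
  have h2 := hR (2 • x)
  simp only [nsmul_eq_mul, Nat.cast_ofNat] at h1 h2 ⊢
  linear_combination (-4) * h1 + h2

lemma two_nsmul_mul_congr {x x' y y' : R} (hx : 2 • x = 2 • x') (hy : 2 • y = 2 • y') :
    2 • (x * y) = 2 • (x' * y') := by
  rw [← smul_mul_assoc, hx, smul_mul_assoc, ← mul_smul_comm, hy, mul_smul_comm]

def crossTerms (u : Fin δ → R) : AddSubgroup R :=
  AddSubgroup.closure <| Set.range fun p : {p : Sym2 (Fin δ) // ¬p.IsDiag} =>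
    Sym2.lift ⟨fun i j => 2 • (u i * u j), fun i j => by simp only [mul_comm]⟩ p.1

lemma two_nsmul_mul_mem_crossTerms (u : Fin δ → R) {i j : Fin δ} (hij : i ≠ j) :
    2 • (u i * u j) ∈ crossTerms u :=
  AddSubgroup.subset_closure ⟨⟨s(i, j), by simpa using hij⟩, rfl⟩

lemma crossTerms_le_range_two_nsmul (u : Fin δ → R) :
    crossTerms u ≤ (nsmulAddMonoidHom 2).range := by
  rw [crossTerms, AddSubgroup.closure_le]
  rintro _ ⟨⟨p, -⟩, rfl⟩
  induction p using Sym2.ind with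
  | h i j => exact ⟨u i * u j, rfl⟩

lemma natCard_crossTerms_le (hR : ∀ x : R, 2 • 2 • x = 0) (u : Fin δ → R) :
    Nat.card (crossTerms u) ≤ 2 ^ δ.choose 2 := by
  have hcard : Fintype.card {p : Sym2 (Fin δ) // ¬p.IsDiag} = δ.choose 2 := by
    rw [Sym2.card_subtype_not_diag, Fintype.card_fin]
  refine hcard ▸ AddSubgroup.natCard_closure_range_le_two_pow _ ?_
  rintro ⟨p, -⟩
  induction p using Sym2.ind with
  | h i j => exact hR _

lemma two_nsmul_mul_mem_sup_crossTerms_of_mem_closure (hR : ∀ x : R, 2 • (x * x) = 2 • x)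
    {C : AddSubgroup R} {u : Fin δ → R} (hu : ∀ i, u i ∈ C) {l l' : R}
    (hl : l ∈ AddSubgroup.closure (Set.range u)) (hl' : l' ∈ AddSubgroup.closure (Set.range u)) :
    2 • (l * l') ∈ C ⊔ crossTerms u := by
  induction hl, hl' using AddSubgroup.closure_induction₂ with
  | mem _ _ hx hy =>
    obtain ⟨i, rfl⟩ := hx
    obtain ⟨j, rfl⟩ := hy
    rcases eq_or_ne i j with rfl | hij
    · rw [hR]
      exact AddSubgroup.mem_sup_left (AddSubgroup.nsmul_mem _ (hu i) 2)
    · exact AddSubgroup.mem_sup_right (two_nsmul_mul_mem_crossTerms u hij)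
  | zero_left => simp
  | zero_right => simp
  | add_left _ _ _ _ _ _ h₁ h₂ => rw [add_mul, smul_add]; exact add_mem h₁ h₂
  | add_right _ _ _ _ _ _ h₁ h₂ => rw [mul_add, smul_add]; exact add_mem h₁ h₂
  | neg_left _ _ _ _ h => rw [neg_mul, smul_neg]; exact neg_mem h
  | neg_right _ _ _ _ h => rw [mul_neg, smul_neg]; exact neg_mem h

lemma two_nsmul_mul_mem_sup_crossTerms (hR : ∀ x : R, 2 • (x * x) = 2 • x) {C : AddSubgroup R}
    {u : Fin δ → R} (hu : ∀ i, u i ∈ C)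
    (hC : ∀ c ∈ C, ∃ l ∈ AddSubgroup.closure (Set.range u), 2 • l = 2 • c)
    {x y : R} (hx : x ∈ C ⊔ crossTerms u) (hy : y ∈ C ⊔ crossTerms u) :
    2 • (x * y) ∈ C ⊔ crossTerms u := by
  have hlift : ∀ x ∈ C ⊔ crossTerms u,
      ∃ l ∈ AddSubgroup.closure (Set.range u), 2 • l = 2 • x := by
    intro x hx
    obtain ⟨c, hc, _, he, rfl⟩ := AddSubgroup.mem_sup.1 hx
    obtain ⟨z, rfl⟩ := crossTerms_le_range_two_nsmul u he
    obtain ⟨l, hl, hlc⟩ := hC c hc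
    refine ⟨l, hl, ?_⟩
    rw [hlc, smul_add, nsmulAddMonoidHom_apply, two_nsmul_two_nsmul_eq_zero hR, add_zero]
  obtain ⟨l, hl, hlx⟩ := hlift x hx
  obtain ⟨l', hl', hly⟩ := hlift y hy
  rw [← two_nsmul_mul_congr hlx hly]
  exact two_nsmul_mul_mem_sup_crossTerms_of_mem_closure hR hu hl hl'

end CommRing

section Amb
variable {α β : ℕ}

lemma Amb.two_nsmul_mul_self (x : Amb α β) : 2 • (x * x) = 2 • x := by
  refine Prod.ext (funext fun i => ?_) (funext fun i => ?_)
  · exact (by decide : ∀ a : ZMod 2, 2 • (a * a) = 2 • a) _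
  · exact (by decide : ∀ a : ZMod 4, 2 • (a * a) = 2 • a) _

lemma Amb.fst_two_nsmul (x : Amb α β) : (2 • x).1 = 0 :=
  funext fun i => (by decide : ∀ a : ZMod 2, 2 • a = 0) (x.1 i)

lemma grayPair_add (a b : ZMod 4) :
    grayPair a + grayPair b = grayPair (a + b + 2 • (a * b)) := by
  revert a b; decide

lemma grayPair_injective : Function.Injective grayPair := by decide

lemma Phi_injective : Function.Injective (Phi (α := α) (β := β)) := by
  intro u v h
  simp only [Phi, Prod.mk.injEq, funext_iff] at h
  exact Prod.ext (funext h.1) (funext fun i => grayPair_injective (h.2 i))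

lemma Phi_add (u v : Amb α β) : Phi u + Phi v = Phi (u + v + 2 • (u * v)) := by
  refine Prod.ext ?_ (funext fun i => grayPair_add _ _)
  show u.1 + v.1 = (u + v + 2 • (u * v)).1
  rw [Prod.fst_add, Prod.fst_add, Amb.fst_two_nsmul, add_zero]

lemma natCard_two_torsion_pi_zmod_four : Nat.card {y : Fin β → ZMod 4 | 2 • y = 0} = 2 ^ β := by
  have hpi : {y : Fin β → ZMod 4 | 2 • y = 0} ≃ (Fin β → {b : ZMod 4 // 2 • b = 0}) :=
    (Equiv.subtypeEquivRight fun y => funext_iff).trans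
      (Equiv.subtypePiEquivPi (p := fun _ b => 2 • b = 0))
  rw [Nat.card_congr hpi, Nat.card_fun, Nat.card_fin, Nat.card_eq_fintype_card]
  rfl

lemma natCard_two_torsion_sup_le (C : AddSubgroup (Amb α β)) {E : AddSubgroup (Amb α β)}
    (hE : E ≤ (nsmulAddMonoidHom 2).range) :
    Nat.card {x | x ∈ C ⊔ E ∧ 2 • x = 0} ≤
      2 ^ Module.finrank (ZMod 2)
        (Submodule.span (ZMod 2) (Prod.fst '' {x : Amb α β | x ∈ C ∧ 2 • x = 0})) * 2 ^ β := by
  set W := Submodule.span (ZMod 2) (Prod.fst '' {x : Amb α β | x ∈ C ∧ 2 • x = 0})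
  have hsub : {x | x ∈ C ⊔ E ∧ 2 • x = 0} ⊆ (W : Set _) ×ˢ {y | 2 • y = 0} := by
    rintro _ ⟨hx, hx2⟩
    obtain ⟨c, hc, _, he, rfl⟩ := AddSubgroup.mem_sup.1 hx
    obtain ⟨z, rfl⟩ := hE he
    have hc2 : 2 • c = 0 := by
      rwa [smul_add, nsmulAddMonoidHom_apply, two_nsmul_two_nsmul_eq_zero Amb.two_nsmul_mul_self,
        add_zero] at hx2
    refine ⟨?_, congrArg Prod.snd hx2⟩
    rw [Prod.fst_add, nsmulAddMonoidHom_apply, Amb.fst_two_nsmul, add_zero]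
    exact Submodule.subset_span ⟨c, ⟨hc, hc2⟩, rfl⟩
  calc Nat.card {x | x ∈ C ⊔ E ∧ 2 • x = 0}
      ≤ Nat.card ↥((W : Set _) ×ˢ {y : Fin β → ZMod 4 | 2 • y = 0}) :=
        Nat.card_mono (Set.toFinite _) hsub
    _ = 2 ^ Module.finrank (ZMod 2) W * 2 ^ β := by
      rw [Nat.card_congr (Equiv.Set.prod _ _), Nat.card_prod, SetLike.coe_sort_coe,
        Module.natCard_eq_pow_finrank (K := ZMod 2), Nat.card_zmod,
        natCard_two_torsion_pi_zmod_four]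

lemma span_image_Phi_subset_image {C S : AddSubgroup (Amb α β)} (hCS : C ≤ S)
    (hS : ∀ x ∈ S, ∀ y ∈ S, 2 • (x * y) ∈ S) :
    (Submodule.span (ZMod 2) (Phi '' (C : Set (Amb α β))) : Set (Bin α β)) ⊆ Phi '' S := by
  intro z hz
  induction hz using Submodule.span_induction with
  | mem z hz => exact Set.image_mono hCS hz
  | zero => exact ⟨0, S.zero_mem, rfl⟩
  | add _ _ _ _ hx hy =>
    obtain ⟨x, hx, rfl⟩ := hx
    obtain ⟨y, hy, rfl⟩ := hy
    exact ⟨_, add_mem (add_mem hx hy) (hS x hx y hy), (Phi_add x y).symm⟩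
  | smul k _ _ hz =>
    obtain rfl | rfl : k = 0 ∨ k = 1 := by revert k; decide
    · rw [zero_smul]
      exact ⟨0, S.zero_mem, rfl⟩
    · rwa [one_smul]

lemma natCard_span_eq_two_pow_rankOf (s : Set (Bin α β)) :
    Nat.card (Submodule.span (ZMod 2) s) = 2 ^ rankOf s := by
  rw [rankOf, Module.natCard_eq_pow_finrank (K := ZMod 2), Nat.card_zmod]

lemma natCard_le_two_pow_rankOf (C : AddSubgroup (Amb α β)) :
    Nat.card C ≤ 2 ^ rankOf (Phi '' (C : Set (Amb α β))) := by
  rw [← natCard_span_eq_two_pow_rankOf, ← SetLike.coe_sort_coe,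
    ← Nat.card_image_of_injective Phi_injective]
  exact Nat.card_mono (Set.toFinite _) Submodule.subset_span

lemma two_pow_rankOf_le_natCard {C S : AddSubgroup (Amb α β)} (hCS : C ≤ S)
    (hS : ∀ x ∈ S, ∀ y ∈ S, 2 • (x * y) ∈ S) :
    2 ^ rankOf (Phi '' (C : Set (Amb α β))) ≤ Nat.card S := by
  rw [← natCard_span_eq_two_pow_rankOf, ← SetLike.coe_sort_coe S,
    ← Nat.card_image_of_injective Phi_injective]
  exact Nat.card_mono (Set.toFinite _) (span_image_Phi_subset_image hCS hS)

lemma IsTypeOf.natCard_map_two_nsmul {γ δ κ : ℕ} {C : AddSubgroup (Amb α β)}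
    (h : IsTypeOf α β γ δ κ C) : Nat.card (C.map (nsmulAddMonoidHom 2)) = 2 ^ δ := by
  have hsplit := C.natCard_eq_natCard_two_torsion_mul
  rw [h.1, h.2.1, show γ + 2 * δ = γ + δ + δ by ring, pow_add] at hsplit
  exact (Nat.eq_of_mul_eq_mul_left (by positivity) hsplit).symm

end Amb

/-- bounds on the rank of a `Z2Z4`-linear code of type `(α,β;γ,δ;κ)`. -/
theorem rank_bounds (α β γ δ κ : ℕ) (C : AddSubgroup (Amb α β))
    (h : IsTypeOf α β γ δ κ C) :
    γ + 2 * δ ≤ rankOf (Phi '' (C : Set (Amb α β))) ∧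
      rankOf (Phi '' (C : Set (Amb α β))) ≤
        min (β + δ + κ) (γ + 2 * δ + δ * (δ - 1) / 2) := by
  have hdbl := h.natCard_map_two_nsmul
  obtain ⟨hcard, -, hκ⟩ := h
  have h4 : ∀ x : Amb α β, 2 • 2 • x = 0 := two_nsmul_two_nsmul_eq_zero Amb.two_nsmul_mul_self
  obtain ⟨u, huC, hu⟩ := C.exists_lift_generators_map_two_nsmul (fun x _ => h4 x) hdbl
  set S := C ⊔ crossTerms u
  have hrank : 2 ^ rankOf (Phi '' (C : Set (Amb α β))) ≤ Nat.card S :=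
    two_pow_rankOf_le_natCard le_sup_left fun x hx y hy =>
      two_nsmul_mul_mem_sup_crossTerms Amb.two_nsmul_mul_self huC hu hx hy
  refine ⟨(Nat.pow_le_pow_iff_right one_lt_two).1 (hcard ▸ natCard_le_two_pow_rankOf C),
    le_min ((Nat.pow_le_pow_iff_right one_lt_two).1 (hrank.trans ?_))
      ((Nat.pow_le_pow_iff_right one_lt_two).1 (hrank.trans ?_))⟩
  · calc Nat.card S
        = Nat.card {x | x ∈ S ∧ 2 • x = 0} * Nat.card (S.map (nsmulAddMonoidHom 2)) :=
          S.natCard_eq_natCard_two_torsion_mul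
      _ ≤ (2 ^ κ * 2 ^ β) * 2 ^ δ := by
          rw [AddSubgroup.map_two_nsmul_sup_eq h4 C (crossTerms_le_range_two_nsmul u), hdbl, ← hκ]
          gcongr
          exact natCard_two_torsion_sup_le C (crossTerms_le_range_two_nsmul u)
      _ = 2 ^ (β + δ + κ) := by ring
  · calc Nat.card S ≤ Nat.card C * Nat.card (crossTerms u) := AddSubgroup.natCard_sup_le _ _
      _ ≤ 2 ^ (γ + 2 * δ) * 2 ^ δ.choose 2 := by
          rw [hcard]; gcongr; exact natCard_crossTerms_le h4 u
      _ = 2 ^ (γ + 2 * δ + δ * (δ - 1) / 2) := by rw [Nat.choose_two_right, ← pow_add]
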